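/- arXiv:2411.11492 — 3 statements merged into one kernel-verified Lean document; each statement's English description precedes it below -/
import Mathlib

section
/- Let G be a group and let φ : G → ℤ be a surjective group homomorphism with kernel K. Suppose that the ℚ-vector space ℚ ⊗_ℤ Ab(K) is finite-dimensional, of dimension d. Then for every integer m ≥ 1, the subgroup H_m := φ⁻¹(mℤ) of G satisfies: ℚ ⊗_ℤ Ab(H_m) is finite-dimensional of dimension at most d + 1. (This is the group-theoretic core of Lemma 3.3: if the Alexander polynomial Δ^ψ_X(t) of a connected finite cell complex X with respect to a primitive class ψ does not vanish, then every finite cyclic cover X'_m of X dual to ψ satisfies b₁(X'_m) ≤ deg(Δ^ψ_X) + 1.) -/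
/-!
`φ⁻¹(mℤ)` is generated by `ker φ` together with any `g₀` with `φ g₀ = m`, so its abelianization
is generated by the image of `Ab(ker φ)` and one more element. Since `ℚ ⊗ -` is right exact,
`ℚ ⊗ Ab(φ⁻¹(mℤ))` is then a quotient of `(ℚ ⊗ Ab(ker φ)) × ℚ`.
-/

open TensorProduct

theorem Abelianization.exists_eq_map_mul_zpow {K H : Type*} [Group K] [Group H] (ι : K →* H)
    (h₀ : H) (hgen : ∀ h : H, ∃ (k : K) (n : ℤ), h = ι k * h₀ ^ n) (a : Abelianization H) :
    ∃ (b : Abelianization K) (n : ℤ), a = Abelianization.map ι b * of h₀ ^ n := by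
  induction a using QuotientGroup.induction_on with
  | H h =>
    obtain ⟨k, n, rfl⟩ := hgen h
    exact ⟨of k, n, by simp only [map_of]; rfl⟩

theorem finrank_baseChange_le_succ_of_forall_eq_add_smul {R 𝕜 M N : Type*} [CommRing R]
    [Field 𝕜] [Algebra R 𝕜] [AddCommGroup M] [Module R M] [AddCommGroup N] [Module R N]
    [FiniteDimensional 𝕜 (𝕜 ⊗[R] M)] (f : M →ₗ[R] N) (x : N)
    (hgen : ∀ y : N, ∃ (z : M) (r : R), y = f z + r • x) :
    FiniteDimensional 𝕜 (𝕜 ⊗[R] N) ∧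
      Module.finrank 𝕜 (𝕜 ⊗[R] N) ≤ Module.finrank 𝕜 (𝕜 ⊗[R] M) + 1 := by
  have hsurj : Function.Surjective (f.coprod (LinearMap.toSpanSingleton R N x)) := by
    intro y
    obtain ⟨z, r, rfl⟩ := hgen y
    exact ⟨(z, r), rfl⟩
  let e : 𝕜 ⊗[R] (M × R) ≃ₗ[𝕜] (𝕜 ⊗[R] M) × 𝕜 :=
    (prodRight R 𝕜 𝕜 M R).trans
      ((LinearEquiv.refl 𝕜 _).prodCongr (AlgebraTensorModule.rid R 𝕜 𝕜))
  let g := ((f.coprod (LinearMap.toSpanSingleton R N x)).baseChange 𝕜).comp e.symm.toLinearMap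
  have hg : Function.Surjective g :=
    (LinearMap.baseChange_surjective 𝕜 hsurj).comp e.symm.surjective
  refine ⟨Module.Finite.of_surjective g hg, ?_⟩
  calc Module.finrank 𝕜 (𝕜 ⊗[R] N) ≤ Module.finrank 𝕜 ((𝕜 ⊗[R] M) × 𝕜) :=
        LinearMap.finrank_le_finrank_of_surjective hg
    _ = Module.finrank 𝕜 (𝕜 ⊗[R] M) + 1 := by rw [Module.finrank_prod, Module.finrank_self]

theorem MonoidHom.exists_mul_zpow_inv_mem_ker {G : Type*} [Group G] (φ : G →* Multiplicative ℤ)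
    {m : ℤ} {g₀ : G} (hg₀ : φ g₀ = Multiplicative.ofAdd m) {g : G}
    (hg : g ∈ Subgroup.comap φ (AddSubgroup.toSubgroup (AddSubgroup.zmultiples m))) :
    ∃ n : ℤ, g * (g₀ ^ n)⁻¹ ∈ φ.ker := by
  obtain ⟨n, hn⟩ := AddSubgroup.mem_zmultiples_iff.mp hg
  refine ⟨n, ?_⟩
  rw [MonoidHom.mem_ker, map_mul, map_inv, map_zpow, hg₀, ← ofAdd_zsmul, hn, ofAdd_toAdd,
    mul_inv_cancel]

theorem stmt_0_general (G : Type*) [Group G] (φ : G →* Multiplicative ℤ)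
    (hφ : Function.Surjective φ) (d : ℕ)
    (hfin : FiniteDimensional ℚ (ℚ ⊗[ℤ] Additive (Abelianization φ.ker)))
    (hd : Module.finrank ℚ (ℚ ⊗[ℤ] Additive (Abelianization φ.ker)) = d)
    (m : ℤ) :
    FiniteDimensional ℚ (ℚ ⊗[ℤ] Additive (Abelianization
      (Subgroup.comap φ (AddSubgroup.toSubgroup (AddSubgroup.zmultiples m))))) ∧
    Module.finrank ℚ (ℚ ⊗[ℤ] Additive (Abelianization
      (Subgroup.comap φ (AddSubgroup.toSubgroup (AddSubgroup.zmultiples m))))) ≤ d + 1 := by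
  set H := Subgroup.comap φ (AddSubgroup.toSubgroup (AddSubgroup.zmultiples m))
  have hKH : φ.ker ≤ H := fun k hk => by
    simp only [H, Subgroup.mem_comap, (MonoidHom.mem_ker).mp hk, one_mem]
  obtain ⟨g₀, hg₀⟩ := hφ (Multiplicative.ofAdd m)
  have hg₀H : g₀ ∈ H := by
    simp only [H, Subgroup.mem_comap, hg₀]
    exact AddSubgroup.mem_zmultiples m
  have hgen (h : H) : ∃ (k : φ.ker) (n : ℤ), h = Subgroup.inclusion hKH k * ⟨g₀, hg₀H⟩ ^ n := by
    obtain ⟨n, hn⟩ := φ.exists_mul_zpow_inv_mem_ker hg₀ h.2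
    exact ⟨⟨_, hn⟩, n, Subtype.ext (by simp)⟩
  subst hd
  exact finrank_baseChange_le_succ_of_forall_eq_add_smul
    (Abelianization.map (Subgroup.inclusion hKH)).toAdditive.toIntLinearMap
    (Additive.ofMul (Abelianization.of ⟨g₀, hg₀H⟩))
    (fun y => (Abelianization.exists_eq_map_mul_zpow _ _ hgen y.toMul).imp
      fun b ⟨n, hn⟩ => ⟨n, congrArg Additive.ofMul hn⟩)

/-- Group-theoretic core of Lemma 3.3: if `ℚ ⊗ Ab(ker φ)` is finite-dimensional of
dimension `d`, then for every `m ≥ 1` the preimage subgroup `φ⁻¹(mℤ)` has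
`ℚ ⊗ Ab` of dimension at most `d + 1`. -/
theorem stmt_0 (G : Type*) [Group G] (φ : G →* Multiplicative ℤ)
    (hφ : Function.Surjective φ) (d : ℕ)
    (hfin : FiniteDimensional ℚ (ℚ ⊗[ℤ] Additive (Abelianization φ.ker)))
    (hd : Module.finrank ℚ (ℚ ⊗[ℤ] Additive (Abelianization φ.ker)) = d)
    (m : ℤ) (hm : 1 ≤ m) :
    FiniteDimensional ℚ (ℚ ⊗[ℤ] Additive (Abelianization
      (Subgroup.comap φ (AddSubgroup.toSubgroup (AddSubgroup.zmultiples m))))) ∧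
    Module.finrank ℚ (ℚ ⊗[ℤ] Additive (Abelianization
      (Subgroup.comap φ (AddSubgroup.toSubgroup (AddSubgroup.zmultiples m))))) ≤ d + 1 :=
  stmt_0_general G φ hφ d hfin hd m
end

section
/- Let M be a finitely generated module over the Laurent polynomial ring ℤ[t,t⁻¹]. Then M is a torsion ℤ[t,t⁻¹]-module (equivalently, M has ℤ[t,t⁻¹]-rank zero, i.e. nonvanishing order) if and only if the ℚ-vector space ℚ ⊗_ℤ M is finite-dimensional. (This bridging fact is used in the proofs of Lemmas 3.2 and 3.3 to translate nonvanishing of the Alexander polynomial Δ^ψ_X(t), i.e. rank zero of H₁ of the infinite cyclic cover over ℤ[t,t⁻¹], into finite-dimensionality of H₁ with rational coefficients.) -/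
open TensorProduct

section Stmt3Aux

open LaurentPolynomial


lemma den_mul_self (q : ℚ) : (q.den : ℚ) * q = q.num := by
  have h : (q.den : ℚ) ≠ 0 := by exact_mod_cast q.den_ne_zero
  rw [mul_comm]
  nth_rewrite 1 [← Rat.num_div_den q]
  rw [div_mul_cancel₀ _ h]

lemma torsion_of_tmul_eq_zero (M : Type*) [AddCommGroup M] (m : M)
    (h : (1:ℚ) ⊗ₜ[ℤ] m = 0) : ∃ z : ℤ, z ≠ 0 ∧ z • m = 0 := by
  have hbc : IsBaseChange ℚ (TensorProduct.mk ℤ ℚ M 1) := TensorProduct.isBaseChange ℤ M ℚ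
  have hloc : IsLocalizedModule (nonZeroDivisors ℤ) (TensorProduct.mk ℤ ℚ M 1) :=
    (isLocalizedModule_iff_isBaseChange (nonZeroDivisors ℤ) ℚ _).mpr hbc
  obtain ⟨s, hs⟩ := (IsLocalizedModule.eq_zero_iff (nonZeroDivisors ℤ)
    (TensorProduct.mk ℤ ℚ M 1)).mp h
  exact ⟨(s : ℤ), nonZeroDivisors.coe_ne_zero s, hs⟩

lemma sum_coeff (n : ℕ) (z : Fin (n+1) → ℤ) (i₀ : Fin (n+1)) :
    ((∑ i, z i • (T (i:ℤ)) : LaurentPolynomial ℤ)).coeff ((i₀:ℤ)) = z i₀ := by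
  rw [AddMonoidAlgebra.coeff_sum, Finset.sum_apply']
  have hterm : ∀ k : Fin (n+1), (z k • (T (k:ℤ) : LaurentPolynomial ℤ)).coeff ((i₀:ℤ))
      = z k * (if (k:ℤ) = (i₀:ℤ) then 1 else 0) := by
    intro k
    rw [AddMonoidAlgebra.coeff_smul_apply, T_apply, smul_eq_mul]
  simp_rw [hterm]
  rw [Finset.sum_eq_single i₀ (fun j _ hj => by
      rw [if_neg, mul_zero]
      exact_mod_cast fun hji => hj (Fin.ext (by exact_mod_cast hji)))
    (fun h' => absurd (Finset.mem_univ i₀) h'), if_pos rfl, mul_one]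

lemma back (M : Type*) [AddCommGroup M] [Module (LaurentPolynomial ℤ) M]
    (hfd : FiniteDimensional ℚ (ℚ ⊗[ℤ] M)) : Module.IsTorsion (LaurentPolynomial ℤ) M := by
  intro x
  set n := Module.finrank ℚ (ℚ ⊗[ℤ] M) with hn
  set f : M →ₗ[ℤ] ℚ ⊗[ℤ] M := TensorProduct.mk ℤ ℚ M 1 with hf
  have hnl : ¬ LinearIndependent ℚ
      (fun i : Fin (n+1) => f ((T (i:ℤ) : LaurentPolynomial ℤ) • x)) := by
    intro h
    have := h.fintype_card_le_finrank
    simp [hn] at this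
  obtain ⟨g, hsum, i₀, hi₀⟩ := Fintype.not_linearIndependent_iff.mp hnl
  set z : Fin (n+1) → ℤ := fun i => (g i).num * ∏ j ∈ Finset.univ.erase i, ((g j).den : ℤ)
    with hz
  set D : ℤ := ∏ j, ((g j).den : ℤ) with hD
  have hzcast : ∀ i, (z i : ℚ) = (D : ℚ) * g i := by
    intro i
    rw [hz, hD, ← Finset.mul_prod_erase Finset.univ _ (Finset.mem_univ i)]
    push_cast
    rw [mul_assoc, mul_comm _ (g i), ← mul_assoc, den_mul_self, mul_comm]
  have hz0 : z i₀ ≠ 0 := by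
    apply mul_ne_zero (Rat.num_ne_zero.mpr hi₀)
    exact Finset.prod_ne_zero_iff.mpr fun j _ => Int.natCast_ne_zero.mpr (g j).den_ne_zero
  have hp0 : (∑ i, z i • (T (i:ℤ)) : LaurentPolynomial ℤ) ≠ 0 := by
    intro h
    apply hz0
    have h4 := sum_coeff n z i₀
    rw [h] at h4
    exact h4.symm.trans rfl
  have hfp : f ((∑ i, z i • (T (i:ℤ)) : LaurentPolynomial ℤ) • x) = 0 := by
    rw [Finset.sum_smul]
    simp_rw [smul_assoc]
    rw [map_sum]
    simp_rw [map_zsmul]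
    calc ∑ i, z i • f ((T (i:ℤ) : LaurentPolynomial ℤ) • x)
        = ∑ i, (z i : ℚ) • f ((T (i:ℤ) : LaurentPolynomial ℤ) • x) := by
          simp_rw [Int.cast_smul_eq_zsmul]
      _ = (D:ℚ) • ∑ i, g i • f ((T (i:ℤ) : LaurentPolynomial ℤ) • x) := by
          rw [Finset.smul_sum]; simp_rw [hzcast, mul_smul]
      _ = 0 := by rw [hsum, smul_zero]
  obtain ⟨w, hw0, hw⟩ := torsion_of_tmul_eq_zero M _ hfp
  refine ⟨⟨(w : LaurentPolynomial ℤ) * ∑ i, z i • (T (i:ℤ)),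
    mem_nonZeroDivisors_of_ne_zero (mul_ne_zero ?_ hp0)⟩, ?_⟩
  · intro hcast
    apply hw0
    have h2 : (C w : LaurentPolynomial ℤ) = 0 := by
      rw [eq_intCast (C : ℤ →+* LaurentPolynomial ℤ) w]; exact hcast
    have h4 : (C w : LaurentPolynomial ℤ).coeff 0 = (0 : LaurentPolynomial ℤ).coeff 0 := by rw [h2]
    rw [C_apply, if_pos rfl] at h4
    exact h4
  · show ((w : LaurentPolynomial ℤ) * ∑ i, z i • (T (i:ℤ))) • x = 0
    rw [mul_smul, Int.cast_smul_eq_zsmul]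
    exact hw


lemma decompL (p : LaurentPolynomial ℤ) :
    p = ∑ l ∈ p.coeff.support, (p.coeff l) • LaurentPolynomial.T l := by
  conv_lhs => rw [← AddMonoidAlgebra.sum_coeff_single p]
  rw [Finsupp.sum]
  refine Finset.sum_congr rfl fun l _ => ?_
  rw [LaurentPolynomial.T, AddMonoidAlgebra.smul_single', mul_one]

lemma smul_decomp {M : Type*} [AddCommGroup M] [Module (LaurentPolynomial ℤ) M]
    (r : LaurentPolynomial ℤ) (y : M) :
    r • y = ∑ l ∈ r.coeff.support, (r.coeff l) • ((T l : LaurentPolynomial ℤ) • y) := by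
  conv_lhs => rw [decompL r]
  rw [Finset.sum_smul]
  simp_rw [smul_assoc]

lemma fwd (M : Type*) [AddCommGroup M] [Module (LaurentPolynomial ℤ) M]
    (hfg : Module.Finite (LaurentPolynomial ℤ) M)
    (htor : Module.IsTorsion (LaurentPolynomial ℤ) M) : FiniteDimensional ℚ (ℚ ⊗[ℤ] M) := by
  classical
  obtain ⟨k, s, hspan⟩ := Module.Finite.exists_fin (R := LaurentPolynomial ℤ) (M := M)
  choose a ha using fun i => @htor (s i)
  set f : M →ₗ[ℤ] ℚ ⊗[ℤ] M := TensorProduct.mk ℤ ℚ M 1 with hf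
  set p : LaurentPolynomial ℤ := ∏ i, (a i : LaurentPolynomial ℤ) with hp
  have hp0 : p ≠ 0 :=
    Finset.prod_ne_zero_iff.mpr fun i _ => nonZeroDivisors.coe_ne_zero (a i)
  have hps : ∀ i, p • s i = 0 := by
    intro i
    rw [hp, ← Finset.mul_prod_erase Finset.univ _ (Finset.mem_univ i), mul_comm, mul_smul]
    rw [show (a i : LaurentPolynomial ℤ) • s i = 0 from ha i, smul_zero]
  have hsupp : p.coeff.support.Nonempty := Finsupp.support_nonempty_iff.mpr (mt AddMonoidAlgebra.coeff_eq_zero.mp hp0)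
  set A : ℤ := p.coeff.support.min' hsupp with hA
  set B : ℤ := p.coeff.support.max' hsupp with hB
  set t : Finset (ℚ ⊗[ℤ] M) :=
    (Finset.univ ×ˢ Finset.Icc A (B-1)).image
      (fun q : Fin k × ℤ => f ((T q.2 : LaurentPolynomial ℤ) • s q.1)) with ht
  set U : Submodule ℚ (ℚ ⊗[ℤ] M) := Submodule.span ℚ (t : Set (ℚ ⊗[ℤ] M)) with hU
  -- the fundamental relation
  have hrel : ∀ (m : ℤ) (i : Fin k),
      ∑ l ∈ p.coeff.support, (p.coeff l : ℚ) • f ((T (m + l) : LaurentPolynomial ℤ) • s i) = 0 := by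
    intro m i
    have h2 : (T m : LaurentPolynomial ℤ) * p = ∑ l ∈ p.coeff.support, (p.coeff l) • T (m + l) := by
      conv_lhs => rw [decompL p]
      rw [Finset.mul_sum]
      refine Finset.sum_congr rfl fun l _ => ?_
      rw [mul_smul_comm, ← T_add]
    have h1 : ((T m : LaurentPolynomial ℤ) * p) • s i = 0 := by
      rw [mul_smul, hps, smul_zero]
    rw [h2, Finset.sum_smul] at h1
    simp_rw [smul_assoc] at h1
    have h3 := congrArg f h1
    rw [map_sum, map_zero] at h3
    simp_rw [map_zsmul] at h3
    calc ∑ l ∈ p.coeff.support, (p.coeff l : ℚ) • f ((T (m + l) : LaurentPolynomial ℤ) • s i)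
        = ∑ l ∈ p.coeff.support, (p.coeff l) • f ((T (m + l) : LaurentPolynomial ℤ) • s i) := by
          simp_rw [Int.cast_smul_eq_zsmul]
      _ = 0 := h3
  -- window membership by two-sided induction
  have key : ∀ (K : ℕ) (j : ℤ) (i : Fin k), A - K ≤ j → j ≤ B - 1 + K →
      f ((T j : LaurentPolynomial ℤ) • s i) ∈ U := by
    intro K
    induction K with
    | zero =>
      intro j i h1 h2
      apply Submodule.subset_span
      rw [ht]
      simp only [Finset.coe_image, Set.mem_image]
      exact ⟨(i, j), by
        simp only [Finset.mem_coe, Finset.mem_product, Finset.mem_univ, true_and,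
          Finset.mem_Icc]
        omega, rfl⟩
    | succ K ih =>
      intro j i h1 h2
      by_cases hc : A - K ≤ j ∧ j ≤ B - 1 + K
      · exact ih j i hc.1 hc.2
      · -- j is at the edge
        have hAB : A ≤ B := Finset.min'_le _ _ (Finset.max'_mem _ hsupp)
        rcases not_and_or.mp hc with hlt | hgt
        · -- j = A - K - 1 : use bottom coefficient
          have hj : j = A - K - 1 := by omega
          have hmem : A ∈ p.coeff.support := Finset.min'_mem _ hsupp
          have hcA : (p.coeff A : ℚ) ≠ 0 := by
            exact_mod_cast Finsupp.mem_support_iff.mp hmem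
          have h0 := hrel (j - A) i
          rw [← Finset.add_sum_erase _ _ hmem] at h0
          have hterm : ∀ l ∈ p.coeff.support.erase A,
              (p.coeff l : ℚ) • f ((T (j - A + l) : LaurentPolynomial ℤ) • s i) ∈ U := by
            intro l hl
            have hl1 := Finset.mem_of_mem_erase hl
            have hlA : l ≠ A := Finset.ne_of_mem_erase hl
            have : A ≤ l := Finset.min'_le _ _ hl1
            have : l ≤ B := Finset.le_max' _ _ hl1
            exact Submodule.smul_mem _ _ (ih (j - A + l) i (by omega) (by omega))
          have hv : f ((T (j - A + A) : LaurentPolynomial ℤ) • s i)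
              = ((p.coeff A : ℚ))⁻¹ • (-(∑ l ∈ p.coeff.support.erase A,
                  (p.coeff l : ℚ) • f ((T (j - A + l) : LaurentPolynomial ℤ) • s i))) := by
            rw [eq_inv_smul_iff₀ hcA]
            exact eq_neg_of_add_eq_zero_left h0
          have : f ((T (j - A + A) : LaurentPolynomial ℤ) • s i) ∈ U := by
            rw [hv]
            exact Submodule.smul_mem _ _ (Submodule.neg_mem _
              (Submodule.sum_mem _ hterm))
          rwa [show j - A + A = j by ring] at this
        · -- j = B + K : use top coefficient
          have hj : j = B + K := by omega
          have hmem : B ∈ p.coeff.support := Finset.max'_mem _ hsupp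
          have hcB : (p.coeff B : ℚ) ≠ 0 := by
            exact_mod_cast Finsupp.mem_support_iff.mp hmem
          have h0 := hrel (j - B) i
          rw [← Finset.add_sum_erase _ _ hmem] at h0
          have hterm : ∀ l ∈ p.coeff.support.erase B,
              (p.coeff l : ℚ) • f ((T (j - B + l) : LaurentPolynomial ℤ) • s i) ∈ U := by
            intro l hl
            have hl1 := Finset.mem_of_mem_erase hl
            have hlB : l ≠ B := Finset.ne_of_mem_erase hl
            have : A ≤ l := Finset.min'_le _ _ hl1
            have : l ≤ B := Finset.le_max' _ _ hl1
            exact Submodule.smul_mem _ _ (ih (j - B + l) i (by omega) (by omega))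
          have hv : f ((T (j - B + B) : LaurentPolynomial ℤ) • s i)
              = ((p.coeff B : ℚ))⁻¹ • (-(∑ l ∈ p.coeff.support.erase B,
                  (p.coeff l : ℚ) • f ((T (j - B + l) : LaurentPolynomial ℤ) • s i))) := by
            rw [eq_inv_smul_iff₀ hcB]
            exact eq_neg_of_add_eq_zero_left h0
          have : f ((T (j - B + B) : LaurentPolynomial ℤ) • s i) ∈ U := by
            rw [hv]
            exact Submodule.smul_mem _ _ (Submodule.neg_mem _
              (Submodule.sum_mem _ hterm))
          rwa [show j - B + B = j by ring] at this
  have keyall : ∀ (j : ℤ) (i : Fin k), f ((T j : LaurentPolynomial ℤ) • s i) ∈ U := by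
    intro j i
    exact key ((A - j).toNat + (j - (B-1)).toNat) j i (by omega) (by omega)
  have hgen : ∀ (r : LaurentPolynomial ℤ) (i : Fin k), f (r • s i) ∈ U := by
    intro r i
    rw [smul_decomp, map_sum]
    refine Submodule.sum_mem _ fun l _ => ?_
    rw [map_zsmul, ← Int.cast_smul_eq_zsmul ℚ]
    exact Submodule.smul_mem _ _ (keyall l i)
  have hall : ∀ m : M, f m ∈ U := by
    intro m
    have hm : m ∈ Submodule.span (LaurentPolynomial ℤ) (Set.range s) := by
      rw [hspan]; trivial
    induction hm using Submodule.span_induction with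
    | mem u hu => obtain ⟨i, rfl⟩ := hu; simpa using hgen 1 i
    | zero => rw [map_zero]; exact Submodule.zero_mem _
    | add u v _ _ hu hv => rw [map_add]; exact Submodule.add_mem _ hu hv
    | smul r m hm ih =>
      have hst : ∀ w ∈ U,
          (LinearMap.baseChange ℚ ((LinearMap.lsmul (LaurentPolynomial ℤ) M r).restrictScalars ℤ)) w ∈ U := by
        intro w hw
        induction hw using Submodule.span_induction with
        | mem u hu =>
          rw [ht] at hu
          simp only [Finset.coe_image, Set.mem_image] at hu
          obtain ⟨⟨i', j'⟩, _, rfl⟩ := hu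
          rw [hf]
          show (LinearMap.baseChange ℚ _) ((1:ℚ) ⊗ₜ[ℤ] _) ∈ U
          rw [LinearMap.baseChange_tmul]
          have : (LinearMap.lsmul (LaurentPolynomial ℤ) M r).restrictScalars ℤ
              ((T j' : LaurentPolynomial ℤ) • s i') = (r * T j') • s i' := by
            simp only [LinearMap.coe_restrictScalars, LinearMap.lsmul_apply, mul_smul]
          rw [this]
          exact hgen (r * T j') i'
        | zero => rw [map_zero]; exact Submodule.zero_mem _
        | add u v _ _ hu hv => rw [map_add]; exact Submodule.add_mem _ hu hv
        | smul q w _ hw => rw [map_smul]; exact Submodule.smul_mem _ _ hw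
      have := hst _ ih
      rw [hf] at this ⊢
      show (1:ℚ) ⊗ₜ[ℤ] (r • m) ∈ U
      have heq : (LinearMap.baseChange ℚ
            ((LinearMap.lsmul (LaurentPolynomial ℤ) M r).restrictScalars ℤ)) ((1:ℚ) ⊗ₜ[ℤ] m)
          = (1:ℚ) ⊗ₜ[ℤ] (r • m) := by
        rw [LinearMap.baseChange_tmul]
        rfl
      rw [← heq]
      exact this
  have htop : U = ⊤ := by
    rw [eq_top_iff]
    rintro w -
    induction w using TensorProduct.induction_on with
    | zero => exact Submodule.zero_mem _
    | tmul q m =>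
      rw [show (q ⊗ₜ[ℤ] m : ℚ ⊗[ℤ] M) = q • ((1:ℚ) ⊗ₜ[ℤ] m) by
        rw [TensorProduct.smul_tmul', smul_eq_mul, mul_one]]
      exact Submodule.smul_mem _ _ (hall m)
    | add u v hu hv => exact Submodule.add_mem _ hu hv
  exact ⟨⟨t, by rw [← hU, htop]⟩⟩

end Stmt3Aux

/-- Bridging fact used in Lemmas 3.2 and 3.3: a finitely generated module `M` over
`ℤ[t,t⁻¹]` is torsion (equivalently, has rank zero / nonvanishing order) if and only
if the `ℚ`-vector space `ℚ ⊗_ℤ M` is finite-dimensional. -/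
theorem stmt_3 (M : Type*) [AddCommGroup M] [Module (LaurentPolynomial ℤ) M]
    (hfg : Module.Finite (LaurentPolynomial ℤ) M) :
    Module.IsTorsion (LaurentPolynomial ℤ) M ↔ FiniteDimensional ℚ (ℚ ⊗[ℤ] M) :=
  ⟨fun h => fwd M hfg h, fun h => back M h⟩
end

section
/- Let V be a finite-dimensional vector space over ℚ equipped with a nondegenerate alternating bilinear form ω, and let c_1, …, c_s ∈ V be linearly independent vectors with ω(c_i, c_j) = 0 for all i, j. Let f : V → V be the composite of the transvections T_i, where T_i(x) = x + ω(x, c_i)·c_i. Then: (a) (f − id)² = 0, so f is unipotent and its characteristic polynomial is (X − 1)^{dim V}; and (b) the fixed subspace {x ∈ V : f(x) = x} has dimension (dim V) − s. (This linear algebra underlies Example 7.2: there the monodromy f of the surface bundle N = N(g,s) is a product of Dehn twists along s disjoint simple closed curves with nonseparating union, giving b₁(N) = 1 + 2g − s and Δ^φ_N(t) ≐ (t−1)^{2g} for the fibered class φ.) -/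
/-!
Write `T i = 1 + N i` with `N i x = ω x (c i) • c i`. Isotropy of the `c i` gives
`N i * N j = 0` for all `i, j`, so `f = 1 + ∑ i, N i` and `(f - 1)² = 0`. By linear independence,
`ker (∑ i, N i)` is the `ω`-orthogonal of `span c`, which has codimension `s` because `ω` is
nondegenerate.
-/

open Module Polynomial

theorem List.prod_ofFn_one_add_of_mul_eq_zero {R : Type*} [Semiring R] {s : ℕ} (N : Fin s → R)
    (hN : ∀ i j, N i * N j = 0) : (List.ofFn fun i => 1 + N i).prod = 1 + ∑ i, N i := by
  induction s with
  | zero => simp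
  | succ s ih =>
    have hhead : N 0 * ∑ i : Fin s, N i.succ = 0 := by simp [Finset.mul_sum, hN]
    rw [List.ofFn_succ, List.prod_cons, ih (fun i => N i.succ) fun i j => hN _ _,
      Fin.sum_univ_succ]
    simp only [mul_add, add_mul, one_mul, mul_one, hhead, add_zero, add_assoc]

theorem Finset.sum_mul_sum_eq_zero_of_mul_eq_zero {R ι : Type*} [NonUnitalNonAssocSemiring R]
    [Fintype ι] (N : ι → R) (hN : ∀ i j, N i * N j = 0) : (∑ i, N i) * (∑ i, N i) = 0 := by
  simp [Finset.sum_mul_sum, hN]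

theorem LinearMap.charpoly_eq_X_sub_one_pow_of_isNilpotent {R M : Type*} [CommRing R] [IsDomain R]
    [AddCommGroup M] [Module R M] [Module.Finite R M] [Module.Free R M] {f : Module.End R M}
    (hf : IsNilpotent (f - 1)) : f.charpoly = (X - 1) ^ finrank R M := by
  have hshift := f.charpoly_sub_smul 1
  rw [one_smul, hf.charpoly_eq_X_pow_finrank, C_1] at hshift
  have := congrArg (·.comp (X - 1)) hshift
  simpa [Polynomial.comp_assoc, eq_comm] using this

namespace LinearMap

variable {R M : Type*} [CommRing R] [AddCommGroup M] [Module R M]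

theorem smulRight_flip_mul_smulRight_flip {ω : M →ₗ[R] M →ₗ[R] R} {a b : M} (h : ω b a = 0) :
    (ω.flip a).smulRight a * (ω.flip b).smulRight b = 0 := by
  ext x
  simp [h]

theorem ker_sum_smulRight_flip {ι : Type*} [Fintype ι] {ω : M →ₗ[R] M →ₗ[R] R}
    (hω : ω.IsRefl) {c : ι → M} (hc : LinearIndependent R c) :
    ker (∑ i, (ω.flip (c i)).smulRight (c i)) =
      BilinForm.orthogonal ω (Submodule.span R (Set.range c)) := by
  ext x
  have hspan : (∀ n ∈ Submodule.span R (Set.range c), ω n x = 0) ↔ ∀ i, ω (c i) x = 0 := by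
    refine ⟨fun h i => h _ (Submodule.subset_span ⟨i, rfl⟩), fun h n hn => ?_⟩
    exact Submodule.span_le (p := ker (ω.flip x)).mpr (Set.range_subset_iff.mpr h) hn
  simp only [mem_ker, sum_apply, smulRight_apply, flip_apply, BilinForm.mem_orthogonal_iff, hspan]
  refine ⟨fun h i => hω _ _ (Fintype.linearIndependent_iff.mp hc _ h i), fun h => ?_⟩
  simp [fun i => hω _ _ (h i)]

end LinearMap

/-- Linear algebra underlying Example 7.2: a product of transvections along pairwise
`ω`-orthogonal, linearly independent vectors `c i` of a nondegenerate alternating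
form `ω` is unipotent with `(f - 1)² = 0`, characteristic polynomial `(X - 1)^dim V`,
and fixed subspace of dimension `dim V - s`. -/
theorem stmt_8 (V : Type*) [AddCommGroup V] [Module ℚ V] [FiniteDimensional ℚ V]
    (ω : V →ₗ[ℚ] V →ₗ[ℚ] ℚ)
    (halt : ∀ x, ω x x = 0)
    (hnd : ∀ x, (∀ y, ω x y = 0) → x = 0)
    (s : ℕ) (c : Fin s → V) (hli : LinearIndependent ℚ c)
    (hortho : ∀ i j, ω (c i) (c j) = 0)
    (T : Fin s → Module.End ℚ V)
    (hT : ∀ i x, T i x = x + ω x (c i) • c i)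
    (f : Module.End ℚ V) (hf : f = (List.ofFn T).prod) :
    (f - 1) * (f - 1) = 0 ∧
    f.charpoly = (Polynomial.X - 1) ^ (Module.finrank ℚ V) ∧
    Module.finrank ℚ (LinearMap.ker (f - 1)) = Module.finrank ℚ V - s := by
  set N : Fin s → Module.End ℚ V := fun i => (ω.flip (c i)).smulRight (c i)
  have hN : ∀ i j, N i * N j = 0 := fun i j =>
    LinearMap.smulRight_flip_mul_smulRight_flip (hortho j i)
  have hsub : f - 1 = ∑ i, N i := by
    have hTN : T = fun i => 1 + N i := by ext i x; simp [N, hT]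
    rw [hf, hTN, List.prod_ofFn_one_add_of_mul_eq_zero N hN, add_sub_cancel_left]
  have hsq : (f - 1) * (f - 1) = 0 := hsub ▸ Finset.sum_mul_sum_eq_zero_of_mul_eq_zero N hN
  have hrefl : ω.IsRefl := LinearMap.IsAlt.isRefl halt
  have hnondeg : ω.Nondegenerate := hrefl.nondegenerate_iff_separatingLeft.mpr hnd
  refine ⟨hsq, LinearMap.charpoly_eq_X_sub_one_pow_of_isNilpotent ⟨2, by rw [sq, hsq]⟩, ?_⟩
  rw [hsub, LinearMap.ker_sum_smulRight_flip hrefl hli,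
    LinearMap.BilinForm.finrank_orthogonal hnondeg, finrank_span_eq_card hli, Fintype.card_fin]
end
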